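/- arXiv:1406.7846 — 5 statements merged into one kernel-verified Lean document; each statement's English description precedes it below -/
import Mathlib

section
/- For every measurable function u : [0,1]^2 → ℝ in L^∞, the jumble norm satisfies ‖u‖_□ ≤ ‖u‖_⊞ ≤ ‖u‖_□^{1/2} ‖u‖_∞^{1/2}, where ‖u‖_□ = sup_{S,T} |∫_{S×T} u| is the cut norm. -/
open MeasureTheory Set

/-- The jumble norm of `u : [0,1]² → ℝ`. -/
noncomputable def jumbleNorm (u : ℝ × ℝ → ℝ) : ℝ :=
  sSup {r : ℝ | ∃ S T : Set ℝ, MeasurableSet S ∧ MeasurableSet T ∧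
    S ⊆ Icc 0 1 ∧ T ⊆ Icc 0 1 ∧ 0 < (volume S).toReal ∧ 0 < (volume T).toReal ∧
    r = |∫ p in S ×ˢ T, u p| / Real.sqrt ((volume S).toReal * (volume T).toReal)}

/-- The cut norm of `u : [0,1]² → ℝ`. -/
noncomputable def cutNorm (u : ℝ × ℝ → ℝ) : ℝ :=
  sSup {r : ℝ | ∃ S T : Set ℝ, MeasurableSet S ∧ MeasurableSet T ∧
    S ⊆ Icc 0 1 ∧ T ⊆ Icc 0 1 ∧ r = |∫ p in S ×ˢ T, u p|}

/-- The `L^∞` norm of a function on `[0,1]²`. -/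
noncomputable def lInfNorm2 (u : ℝ × ℝ → ℝ) : ℝ :=
  (eLpNorm u ⊤ (volume.restrict (Icc 0 1 ×ˢ Icc 0 1))).toReal

/-!
Since `S, T ⊆ [0,1]`, every rectangle satisfies `|∫_{S×T} u| ≤ ‖u‖_∞ |S| |T|` with `|S| |T| ≤ 1`.
Dividing by `√(|S| |T|) ≤ 1` can only increase `|∫_{S×T} u|`, which gives `‖u‖_□ ≤ ‖u‖_⊞`
(null rectangles contribute `0`). For the upper bound write
`|∫_{S×T} u| / √(|S| |T|) = √|∫_{S×T} u| · (√|∫_{S×T} u| / √(|S| |T|))`: the first factor is at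
most `‖u‖_□^{1/2}` and the second at most `‖u‖_∞^{1/2}`.
-/

theorem norm_setIntegral_le_toReal_eLpNorm_top_mul {α E : Type*} [MeasurableSpace α]
    [NormedAddCommGroup E] [NormedSpace ℝ E] {μ : Measure α} {f : α → E} {s t : Set α}
    (hf : eLpNorm f ⊤ (μ.restrict t) ≠ ⊤) (hst : s ⊆ t) (hs : μ s < ⊤) :
    ‖∫ x in s, f x ∂μ‖ ≤ (eLpNorm f ⊤ (μ.restrict t)).toReal * μ.real s := by
  refine norm_setIntegral_le_of_norm_le_const_ae hs (ae_restrict_of_ae_restrict_of_subset hst ?_)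
  filter_upwards [ae_le_eLpNormEssSup (μ := μ.restrict t) (f := f)] with x hx
  rw [← toReal_enorm, eLpNorm_exponent_top]
  exact ENNReal.toReal_mono (eLpNorm_exponent_top (f := f) ▸ hf) hx

theorem div_sqrt_le_sqrt_mul_sqrt {I M v : ℝ} (hI : 0 ≤ I) (hv : 0 < v) (hIM : I ≤ M * v) :
    I / √v ≤ √I * √M := by
  have hM : 0 ≤ M := nonneg_of_mul_nonneg_left (hI.trans hIM) hv
  have hsqrtI : √I ≤ √M * √v := (Real.sqrt_le_sqrt hIM).trans_eq (Real.sqrt_mul hM v)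
  calc I / √v = √I * (√I / √v) := by rw [mul_div_assoc', Real.mul_self_sqrt hI]
    _ ≤ √I * √M := by
      gcongr
      rwa [div_le_iff₀ (Real.sqrt_pos.2 hv)]

section UnitSquare

variable {u : ℝ × ℝ → ℝ} {S T : Set ℝ}

theorem volume_lt_top_of_subset_Icc (hS : S ⊆ Icc 0 1) : volume S < ⊤ :=
  (measure_mono hS).trans_lt measure_Icc_lt_top

theorem toReal_volume_le_one_of_subset_Icc (hS : S ⊆ Icc 0 1) : (volume S).toReal ≤ 1 := by
  have h : (volume S).toReal ≤ (volume (Icc (0 : ℝ) 1)).toReal :=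
    ENNReal.toReal_mono measure_Icc_lt_top.ne (measure_mono hS)
  simpa using h

theorem toReal_volume_mul_le_one (hS : S ⊆ Icc 0 1) (hT : T ⊆ Icc 0 1) :
    (volume S).toReal * (volume T).toReal ≤ 1 :=
  mul_le_one₀ (toReal_volume_le_one_of_subset_Icc hS) ENNReal.toReal_nonneg
    (toReal_volume_le_one_of_subset_Icc hT)

theorem abs_setIntegral_prod_le_lInfNorm2_mul
    (hu : MemLp u ⊤ (volume.restrict (Icc 0 1 ×ˢ Icc 0 1)))
    (hS : S ⊆ Icc 0 1) (hT : T ⊆ Icc 0 1) :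
    |∫ p in S ×ˢ T, u p| ≤ lInfNorm2 u * ((volume S).toReal * (volume T).toReal) := by
  have hST : volume (S ×ˢ T) < ⊤ := by
    rw [Measure.volume_eq_prod, Measure.prod_prod]
    exact ENNReal.mul_lt_top (volume_lt_top_of_subset_Icc hS) (volume_lt_top_of_subset_Icc hT)
  have h := norm_setIntegral_le_toReal_eLpNorm_top_mul hu.eLpNorm_ne_top (prod_mono hS hT) hST
  rwa [Real.norm_eq_abs, Measure.volume_eq_prod, measureReal_prod_prod] at h

theorem abs_setIntegral_prod_le_cutNorm
    (hu : MemLp u ⊤ (volume.restrict (Icc 0 1 ×ˢ Icc 0 1)))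
    (hmS : MeasurableSet S) (hmT : MeasurableSet T) (hS : S ⊆ Icc 0 1) (hT : T ⊆ Icc 0 1) :
    |∫ p in S ×ˢ T, u p| ≤ cutNorm u := by
  refine le_csSup ⟨lInfNorm2 u, ?_⟩ ⟨S, T, hmS, hmT, hS, hT, rfl⟩
  rintro _ ⟨S, T, -, -, hS, hT, rfl⟩
  exact (abs_setIntegral_prod_le_lInfNorm2_mul hu hS hT).trans
    (mul_le_of_le_one_right ENNReal.toReal_nonneg (toReal_volume_mul_le_one hS hT))

theorem abs_setIntegral_prod_div_le_sqrt_cutNorm_mul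
    (hu : MemLp u ⊤ (volume.restrict (Icc 0 1 ×ˢ Icc 0 1)))
    (hmS : MeasurableSet S) (hmT : MeasurableSet T) (hS : S ⊆ Icc 0 1) (hT : T ⊆ Icc 0 1)
    (hS₀ : 0 < (volume S).toReal) (hT₀ : 0 < (volume T).toReal) :
    |∫ p in S ×ˢ T, u p| / √((volume S).toReal * (volume T).toReal) ≤
      √(cutNorm u) * √(lInfNorm2 u) :=
  (div_sqrt_le_sqrt_mul_sqrt (abs_nonneg _) (mul_pos hS₀ hT₀)
    (abs_setIntegral_prod_le_lInfNorm2_mul hu hS hT)).trans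
    (by gcongr; exact abs_setIntegral_prod_le_cutNorm hu hmS hmT hS hT)

theorem abs_setIntegral_prod_div_le_jumbleNorm
    (hu : MemLp u ⊤ (volume.restrict (Icc 0 1 ×ˢ Icc 0 1)))
    (hmS : MeasurableSet S) (hmT : MeasurableSet T) (hS : S ⊆ Icc 0 1) (hT : T ⊆ Icc 0 1)
    (hS₀ : 0 < (volume S).toReal) (hT₀ : 0 < (volume T).toReal) :
    |∫ p in S ×ˢ T, u p| / √((volume S).toReal * (volume T).toReal) ≤ jumbleNorm u := by
  refine le_csSup ⟨√(cutNorm u) * √(lInfNorm2 u), ?_⟩ ⟨S, T, hmS, hmT, hS, hT, hS₀, hT₀, rfl⟩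
  rintro _ ⟨S, T, hmS, hmT, hS, hT, hS₀, hT₀, rfl⟩
  exact abs_setIntegral_prod_div_le_sqrt_cutNorm_mul hu hmS hmT hS hT hS₀ hT₀

theorem jumbleNorm_nonneg (u : ℝ × ℝ → ℝ) : 0 ≤ jumbleNorm u :=
  Real.sSup_nonneg <| by rintro _ ⟨S, T, -, -, -, -, -, -, rfl⟩; positivity

theorem abs_setIntegral_prod_le_jumbleNorm
    (hu : MemLp u ⊤ (volume.restrict (Icc 0 1 ×ˢ Icc 0 1)))
    (hmS : MeasurableSet S) (hmT : MeasurableSet T) (hS : S ⊆ Icc 0 1) (hT : T ⊆ Icc 0 1) :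
    |∫ p in S ×ˢ T, u p| ≤ jumbleNorm u := by
  by_cases hpos : 0 < (volume S).toReal ∧ 0 < (volume T).toReal
  · have hsqrt : √((volume S).toReal * (volume T).toReal) ≤ 1 :=
      Real.sqrt_le_one.2 (toReal_volume_mul_le_one hS hT)
    exact (le_div_self (abs_nonneg _) (Real.sqrt_pos.2 (mul_pos hpos.1 hpos.2)) hsqrt).trans
      (abs_setIntegral_prod_div_le_jumbleNorm hu hmS hmT hS hT hpos.1 hpos.2)
  · have hnull : (volume S).toReal * (volume T).toReal = 0 := by
      rcases not_and_or.1 hpos with h | h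
      · rw [le_antisymm (not_lt.1 h) ENNReal.toReal_nonneg, zero_mul]
      · rw [le_antisymm (not_lt.1 h) ENNReal.toReal_nonneg, mul_zero]
    calc |∫ p in S ×ˢ T, u p| ≤ lInfNorm2 u * 0 :=
          hnull ▸ abs_setIntegral_prod_le_lInfNorm2_mul hu hS hT
      _ ≤ jumbleNorm u := by rw [mul_zero]; exact jumbleNorm_nonneg u

end UnitSquare

theorem cut_le_jumble_le (u : ℝ × ℝ → ℝ)
    (hu : MemLp u ⊤ (volume.restrict (Icc 0 1 ×ˢ Icc 0 1))) :
    cutNorm u ≤ jumbleNorm u ∧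
      jumbleNorm u ≤ Real.sqrt (cutNorm u) * Real.sqrt (lInfNorm2 u) := by
  constructor
  · refine Real.sSup_le ?_ (jumbleNorm_nonneg u)
    rintro _ ⟨S, T, hmS, hmT, hS, hT, rfl⟩
    exact abs_setIntegral_prod_le_jumbleNorm hu hmS hmT hS hT
  · refine Real.sSup_le ?_ (by positivity)
    rintro _ ⟨S, T, hmS, hmT, hS, hT, hS₀, hT₀, rfl⟩
    exact abs_setIntegral_prod_div_le_sqrt_cutNorm_mul hu hmS hmT hS hT hS₀ hT₀
end

section
/- Let P = {S_1,…,S_k} be a measurable partition of [0,1] and let u : [0,1]^2 → ℝ be a stepfunction with steps in P×P (constant on each S_i × S_j). Then there exist index sets A, B ⊆ [k] such that, with T_1 = ⋃_{i∈A} S_i and T_2 = ⋃_{j∈B} S_j, the jumble norm of u equals (λ(T_1)λ(T_2))^{-1/2} |∫_{T_1×T_2} u|. -/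
/-!
With `x i = λ(X ∩ S i)` and `y j = λ(Y ∩ S j)`, the ratio of a stepfunction with values `c i j`
on `X × Y` is `|∑ c i j x i y j| / √(∑ x i * ∑ y j)`, a function of the box points
`x ∈ ∏ [0, λ(S i)]` and `y`. As a function of a single coordinate `t = x i` its square has the
form `(a t + b)² / (t + s)`, which is convex, so it is maximised at `t = 0` or `t = λ(S i)`.
Rounding the coordinates of `x` and then of `y` one at a time therefore never decreases the ratio
and ends at a pair of unions of classes. Among the finitely many such pairs a best one exists, and
it attains the supremum.
-/

open MeasureTheory Set Function
open scoped ENNReal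

theorem sq_div_le_max_of_mem_Icc {a b s t m : ℝ} (ht : t ∈ Icc 0 m) (hs : 0 ≤ s)
    (hb : s = 0 → b = 0) :
    (a * t + b) ^ 2 / (t + s) ≤ max (b ^ 2 / s) ((a * m + b) ^ 2 / (m + s)) := by
  rcases hs.eq_or_lt with rfl | hs
  · have e (r : ℝ) : (a * r + 0) ^ 2 / (r + 0) = a ^ 2 * r := by
      rw [add_zero, add_zero, mul_pow, sq r, mul_div_assoc, mul_self_div_self]
    rw [hb rfl, e, e]
    exact le_max_of_le_right (mul_le_mul_of_nonneg_left ht.2 (sq_nonneg a))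
  rcases ht.1.eq_or_lt with rfl | ht0
  · simp
  have hm : 0 < m := ht0.trans_le ht.2
  set M := max (b ^ 2 / s) ((a * m + b) ^ 2 / (m + s))
  have h0 : b ^ 2 ≤ M * s := (div_le_iff₀ hs).1 (le_max_left _ _)
  have h1 : (a * m + b) ^ 2 ≤ M * (m + s) := (div_le_iff₀ (by positivity)).1 (le_max_right _ _)
  -- convexity of `t ↦ (a t + b)² / (t + s)`, cleared of denominators
  have key : (a * t + b) ^ 2 * (m * s * (m + s)) + m * t * (m - t) * (b - a * s) ^ 2 =
      ((m - t) * b ^ 2 * (m + s) + t * (a * m + b) ^ 2 * s) * (t + s) := by ring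
  rw [div_le_iff₀ (by positivity)]
  refine le_of_mul_le_mul_right ?_ (by positivity : 0 < m * s * (m + s))
  have hmt : 0 ≤ m - t := sub_nonneg.2 ht.2
  nlinarith [mul_nonneg (mul_nonneg (mul_nonneg hm.le ht0.le) hmt) (sq_nonneg (b - a * s)),
    mul_le_mul_of_nonneg_right h0 (by positivity : 0 ≤ (m - t) * (m + s) * (t + s)),
    mul_le_mul_of_nonneg_right h1 (by positivity : 0 ≤ t * s * (t + s))]

theorem abs_div_sqrt_le_max_of_mem_Icc {a b s t m : ℝ} (ht : t ∈ Icc 0 m) (hs : 0 ≤ s)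
    (hb : s = 0 → b = 0) :
    |a * t + b| / √(t + s) ≤ max (|b| / √s) (|a * m + b| / √(m + s)) := by
  have e (p q : ℝ) : |p| / √q = √(p ^ 2 / q) := by
    rw [Real.sqrt_div (sq_nonneg p), Real.sqrt_sq_eq_abs]
  rw [e, e, e, ← Real.sqrt_monotone.map_max]
  exact Real.sqrt_le_sqrt (sq_div_le_max_of_mem_Icc ht hs hb)

section Vertex

variable {ι : Type*} [Fintype ι]

theorem sum_mul_update [DecidableEq ι] (a x : ι → ℝ) (j : ι) (t : ℝ) :
    ∑ i, a i * update x j t i = a j * t + ∑ i, a i * update x j 0 i := by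
  simp only [← Finset.add_sum_erase _ _ (Finset.mem_univ j), update_self, mul_zero, zero_add]
  congr 1
  exact Finset.sum_congr rfl fun i hi => by rw [update_of_ne (Finset.ne_of_mem_erase hi),
    update_of_ne (Finset.ne_of_mem_erase hi)]

theorem sum_update [DecidableEq ι] (x : ι → ℝ) (j : ι) (t : ℝ) :
    ∑ i, update x j t i = t + ∑ i, update x j 0 i := by
  simpa using sum_mul_update 1 x j t

theorem exists_vertex_abs_sum_div_sqrt_ge (a m x : ι → ℝ) (hx : ∀ i, x i ∈ Icc 0 (m i)) :
    ∃ A : Finset ι, |∑ i, a i * x i| / √(∑ i, x i) ≤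
      |∑ i, a i * (A : Set ι).indicator m i| / √(∑ i, (A : Set ι).indicator m i) := by
  classical
  obtain ⟨s, hvert⟩ : ∃ s : Finset ι, ∀ i ∉ s, x i = 0 ∨ x i = m i :=
    ⟨Finset.univ, fun i hi => absurd (Finset.mem_univ i) hi⟩
  induction s using Finset.induction_on generalizing x with
  | empty =>
    have hxA (i : ι) : (Finset.univ.filter (fun i => x i = m i) : Set ι).indicator m i = x i := by
      rcases hvert i (Finset.notMem_empty i) with h | h <;> simp [indicator_apply, h, eq_comm]
    exact ⟨Finset.univ.filter (fun i => x i = m i), by simp only [hxA, le_refl]⟩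
  | insert j s _ ih =>
    have hmj : 0 ≤ m j := (hx j).1.trans (hx j).2
    have hmem {t : ℝ} (ht : t ∈ Icc 0 (m j)) (i : ι) : update x j t i ∈ Icc 0 (m i) := by
      rcases eq_or_ne i j with rfl | hij <;> simp_all
    have hupd (t : ℝ) (ht : t ∈ Icc 0 (m j)) (htv : t = 0 ∨ t = m j) : ∃ A : Finset ι,
        |∑ i, a i * update x j t i| / √(∑ i, update x j t i) ≤
          |∑ i, a i * (A : Set ι).indicator m i| / √(∑ i, (A : Set ι).indicator m i) := by
      refine ih _ (hmem ht) fun i hi => ?_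
      rcases eq_or_ne i j with rfl | hij <;> simp_all
    obtain ⟨A₀, h₀⟩ := hupd 0 ⟨le_rfl, hmj⟩ (Or.inl rfl)
    obtain ⟨A₁, h₁⟩ := hupd (m j) ⟨hmj, le_rfl⟩ (Or.inr rfl)
    have hx₀ (i : ι) : 0 ≤ update x j 0 i := (hmem ⟨le_rfl, hmj⟩ i).1
    have hb : ∑ i, update x j 0 i = 0 → ∑ i, a i * update x j 0 i = 0 := fun h =>
      Finset.sum_eq_zero fun i _ => by
        rw [(Finset.sum_eq_zero_iff_of_nonneg fun i _ => hx₀ i).1 h i (Finset.mem_univ i), mul_zero]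
    have key := abs_div_sqrt_le_max_of_mem_Icc (a := a j) (hx j)
      (Finset.sum_nonneg fun i _ => hx₀ i) hb
    -- `key` compares `x` with its two roundings in the coordinate `j`
    rw [← sum_mul_update, ← sum_update, update_eq_self, ← sum_mul_update, ← sum_update] at key
    rcases le_max_iff.1 key with h | h
    · exact ⟨A₀, h.trans h₀⟩
    · exact ⟨A₁, h.trans h₁⟩

end Vertex

section BilinRatio

variable {ι κ : Type*} [Fintype ι] [Fintype κ]

noncomputable def bilinRatio (c : ι → κ → ℝ) (x : ι → ℝ) (y : κ → ℝ) : ℝ :=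
  |∑ i, ∑ j, c i j * (x i * y j)| / √((∑ i, x i) * ∑ j, y j)

theorem bilinRatio_eq_div_sqrt (c : ι → κ → ℝ) (x : ι → ℝ) {y : κ → ℝ} (hy : 0 ≤ ∑ j, y j) :
    bilinRatio c x y = |∑ i, (∑ j, c i j * y j) * x i| / √(∑ i, x i) / √(∑ j, y j) := by
  rw [bilinRatio, Real.sqrt_mul' _ hy, ← div_div]
  simp only [Finset.sum_mul]
  congr 4 with i
  exact Finset.sum_congr rfl fun j _ => by ring

theorem bilinRatio_swap (c : ι → κ → ℝ) (x : ι → ℝ) (y : κ → ℝ) :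
    bilinRatio (fun j i => c i j) y x = bilinRatio c x y := by
  rw [bilinRatio, bilinRatio, Finset.sum_comm, mul_comm (∑ j, y j)]
  congr 4 with i
  exact Finset.sum_congr rfl fun j _ => by ring

theorem exists_bilinRatio_le_indicator_left (c : ι → κ → ℝ) {m x : ι → ℝ} {y : κ → ℝ}
    (hx : ∀ i, x i ∈ Icc 0 (m i)) (hy : ∀ j, 0 ≤ y j) :
    ∃ A : Finset ι, bilinRatio c x y ≤ bilinRatio c ((A : Set ι).indicator m) y := by
  obtain ⟨A, hA⟩ := exists_vertex_abs_sum_div_sqrt_ge (fun i => ∑ j, c i j * y j) m x hx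
  have hy' : 0 ≤ ∑ j, y j := Finset.sum_nonneg fun j _ => hy j
  exact ⟨A, by simpa only [bilinRatio_eq_div_sqrt c _ hy'] using
    div_le_div_of_nonneg_right hA (Real.sqrt_nonneg (∑ j, y j))⟩

theorem exists_bilinRatio_le_indicator (c : ι → κ → ℝ) {m x : ι → ℝ} {n y : κ → ℝ}
    (hx : ∀ i, x i ∈ Icc 0 (m i)) (hy : ∀ j, y j ∈ Icc 0 (n j)) :
    ∃ (A : Finset ι) (B : Finset κ),
      bilinRatio c x y ≤ bilinRatio c ((A : Set ι).indicator m) ((B : Set κ).indicator n) := by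
  obtain ⟨A, hA⟩ := exists_bilinRatio_le_indicator_left c hx fun j => (hy j).1
  obtain ⟨B, hB⟩ := exists_bilinRatio_le_indicator_left (fun j i => c i j)
    (y := (A : Set ι).indicator m) hy
    fun i => indicator_nonneg (fun i _ => (hx i).1.trans (hx i).2) i
  rw [bilinRatio_swap c, bilinRatio_swap c] at hB
  exact ⟨A, B, hA.trans hB⟩

end BilinRatio

section Partition

variable {α β ι κ : Type*} [MeasurableSpace α] [MeasurableSpace β]
  {μ : Measure α} {ν : Measure β} {S : ι → Set α} {T : κ → Set β}

theorem measureReal_eq_sum_inter [Fintype ι] (hS : ∀ i, MeasurableSet (S i))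
    (hSd : Pairwise (Disjoint on S)) {X : Set α} (hX : MeasurableSet X) (hXS : X ⊆ ⋃ i, S i)
    (hXfin : μ X ≠ ∞) :
    μ.real X = ∑ i, μ.real (X ∩ S i) := by
  conv_lhs => rw [← inter_eq_left.2 hXS, inter_iUnion]
  exact measureReal_iUnion_fintype
    (fun i j hij => (hSd hij).mono inter_subset_right inter_subset_right)
    (fun i => hX.inter (hS i)) fun i => measure_ne_top_of_subset inter_subset_left hXfin

theorem setIntegral_prod_eq_sum [Fintype ι] [Fintype κ] [SFinite ν]
    (hS : ∀ i, MeasurableSet (S i)) (hT : ∀ j, MeasurableSet (T j)) (hSd : Pairwise (Disjoint on S))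
    (hTd : Pairwise (Disjoint on T)) {u : α × β → ℝ} {c : ι → κ → ℝ}
    (hc : ∀ i j, ∀ p ∈ S i ×ˢ T j, u p = c i j) {X : Set α} {Y : Set β}
    (hX : MeasurableSet X) (hY : MeasurableSet Y) (hXS : X ⊆ ⋃ i, S i) (hYT : Y ⊆ ⋃ j, T j)
    (hXfin : μ X ≠ ∞) (hYfin : ν Y ≠ ∞) :
    ∫ p in X ×ˢ Y, u p ∂μ.prod ν = ∑ i, ∑ j, c i j * (μ.real (X ∩ S i) * ν.real (Y ∩ T j)) := by
  set cell : ι × κ → Set (α × β) := fun p => (X ∩ S p.1) ×ˢ (Y ∩ T p.2)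
  have hcell (p : ι × κ) : MeasurableSet (cell p) := (hX.inter (hS p.1)).prod (hY.inter (hT p.2))
  have hcell_fin (p : ι × κ) : μ.prod ν (cell p) ≠ ∞ := by
    rw [Measure.prod_prod]
    exact ENNReal.mul_ne_top (measure_ne_top_of_subset inter_subset_left hXfin)
      (measure_ne_top_of_subset inter_subset_left hYfin)
  have hu (p : ι × κ) : EqOn u (fun _ => c p.1 p.2) (cell p) := fun q hq =>
    hc p.1 p.2 q (prod_mono inter_subset_right inter_subset_right hq)
  have hcell_disj : Pairwise (Disjoint on cell) := fun p q hpq => by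
    obtain h | h := not_and_or.1 (mt Prod.ext_iff.2 hpq)
    · exact ((hSd h).mono inter_subset_right inter_subset_right).set_prod_left _ _
    · exact ((hTd h).mono inter_subset_right inter_subset_right).set_prod_right _ _
  have hXY : X ×ˢ Y = ⋃ p, cell p := by
    rw [iUnion_prod (fun i => X ∩ S i) (fun j => Y ∩ T j), ← inter_iUnion, ← inter_iUnion,
      inter_eq_left.2 hXS, inter_eq_left.2 hYT]
  rw [hXY, integral_iUnion_fintype hcell hcell_disj
    fun p => (integrableOn_const (hcell_fin p)).congr_fun (hu p).symm (hcell p),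
    Fintype.sum_prod_type]
  refine Finset.sum_congr rfl fun i _ => Finset.sum_congr rfl fun j _ => ?_
  rw [setIntegral_congr_fun (hcell (i, j)) (hu (i, j)), setIntegral_const, Measure.real,
    Measure.prod_prod, ENNReal.toReal_mul, smul_eq_mul, mul_comm]
  rfl

theorem measureReal_biUnion_inter (hSd : Pairwise (Disjoint on S)) (A : Finset ι) (i : ι) :
    μ.real ((⋃ a ∈ A, S a) ∩ S i) = (A : Set ι).indicator (fun i => μ.real (S i)) i := by
  by_cases hi : i ∈ A
  · rw [inter_eq_right.2 (Finset.subset_set_biUnion_of_mem hi),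
      indicator_of_mem (Finset.mem_coe.2 hi)]
  · rw [indicator_of_notMem (mt Finset.mem_coe.1 hi), disjoint_iff_inter_eq_empty.1,
      measureReal_empty]
    exact disjoint_iUnion₂_left.2 fun a ha => hSd (ne_of_mem_of_not_mem ha hi)

end Partition

noncomputable def jumbleRatio (u : ℝ × ℝ → ℝ) (X Y : Set ℝ) : ℝ :=
  |∫ p in X ×ˢ Y, u p| / √((volume X).toReal * (volume Y).toReal)

theorem jumbleNorm_eq_jumbleRatio_of_forall_le {u : ℝ × ℝ → ℝ} {X₀ Y₀ : Set ℝ}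
    (hX₀ : MeasurableSet X₀) (hY₀ : MeasurableSet Y₀) (hX₀I : X₀ ⊆ Icc 0 1)
    (hY₀I : Y₀ ⊆ Icc 0 1)
    (hle : ∀ X Y, MeasurableSet X → MeasurableSet Y → X ⊆ Icc 0 1 → Y ⊆ Icc 0 1 →
      jumbleRatio u X Y ≤ jumbleRatio u X₀ Y₀) :
    jumbleNorm u = jumbleRatio u X₀ Y₀ := by
  refine IsGreatest.csSup_eq ⟨?_, ?_⟩
  · by_cases hpos : 0 < (volume X₀).toReal ∧ 0 < (volume Y₀).toReal
    · exact ⟨X₀, Y₀, hX₀, hY₀, hX₀I, hY₀I, hpos.1, hpos.2, rfl⟩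
    -- a null side makes the ratio `0`, so it is attained by `[0,1] × [0,1]`
    have hzero : jumbleRatio u X₀ Y₀ = 0 := by
      rcases not_and_or.1 hpos with h | h <;>
        simp [jumbleRatio, le_antisymm (not_lt.1 h) ENNReal.toReal_nonneg]
    refine ⟨Icc 0 1, Icc 0 1, measurableSet_Icc, measurableSet_Icc, subset_rfl, subset_rfl,
      by simp, by simp, le_antisymm ?_ ?_⟩
    · rw [hzero]; exact div_nonneg (abs_nonneg _) (Real.sqrt_nonneg _)
    · exact hle _ _ measurableSet_Icc measurableSet_Icc subset_rfl subset_rfl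
  · rintro r ⟨X, Y, hX, hY, hXI, hYI, -, -, rfl⟩
    exact hle X Y hX hY hXI hYI

theorem jumbleRatio_eq_bilinRatio {ι : Type*} [Fintype ι] {S : ι → Set ℝ}
    (hS : ∀ i, MeasurableSet (S i)) (hSd : Pairwise (Disjoint on S))
    (hcover : ⋃ i, S i = Icc 0 1) {u : ℝ × ℝ → ℝ} {c : ι → ι → ℝ}
    (hc : ∀ i j, ∀ p ∈ S i ×ˢ S j, u p = c i j) {X Y : Set ℝ} (hX : MeasurableSet X)
    (hY : MeasurableSet Y) (hXI : X ⊆ Icc 0 1) (hYI : Y ⊆ Icc 0 1) :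
    jumbleRatio u X Y =
      bilinRatio c (fun i => volume.real (X ∩ S i)) (fun j => volume.real (Y ∩ S j)) := by
  have hXfin : volume X ≠ ∞ := measure_ne_top_of_subset hXI measure_Icc_lt_top.ne
  have hYfin : volume Y ≠ ∞ := measure_ne_top_of_subset hYI measure_Icc_lt_top.ne
  rw [← hcover] at hXI hYI
  rw [jumbleRatio, bilinRatio, Measure.volume_eq_prod,
    setIntegral_prod_eq_sum hS hS hSd hSd hc hX hY hXI hYI hXfin hYfin, ← measureReal_def,
    ← measureReal_def, measureReal_eq_sum_inter hS hSd hX hXI hXfin,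
    measureReal_eq_sum_inter hS hSd hY hYI hYfin]

/-- For a stepfunction with steps in a measurable partition `P × P` of `[0,1]`,
the jumble norm is attained on unions of partition classes. -/
theorem jumble_attained_on_partition_unions (k : ℕ) (S : Fin k → Set ℝ)
    (hmeas : ∀ i, MeasurableSet (S i))
    (hdisj : Pairwise (Function.onFun Disjoint S))
    (hcover : (⋃ i, S i) = Icc 0 1)
    (u : ℝ × ℝ → ℝ)
    (hstep : ∀ i j : Fin k, ∃ c : ℝ, ∀ p ∈ S i ×ˢ S j, u p = c) :
    ∃ A B : Finset (Fin k),
      jumbleNorm u =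
        |∫ p in (⋃ i ∈ A, S i) ×ˢ (⋃ j ∈ B, S j), u p| /
          Real.sqrt ((volume (⋃ i ∈ A, S i)).toReal * (volume (⋃ j ∈ B, S j)).toReal) := by
  choose c hc using hstep
  have hU (A : Finset (Fin k)) : MeasurableSet (⋃ i ∈ A, S i) ∧ (⋃ i ∈ A, S i) ⊆ Icc 0 1 :=
    ⟨A.measurableSet_biUnion fun i _ => hmeas i,
      hcover ▸ iUnion₂_subset fun i _ => subset_iUnion S i⟩
  have hratio (A B : Finset (Fin k)) : jumbleRatio u (⋃ i ∈ A, S i) (⋃ j ∈ B, S j) =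
      bilinRatio c ((A : Set (Fin k)).indicator fun i => volume.real (S i))
        ((B : Set (Fin k)).indicator fun i => volume.real (S i)) := by
    rw [jumbleRatio_eq_bilinRatio hmeas hdisj hcover hc (hU A).1 (hU B).1 (hU A).2 (hU B).2]
    simp only [measureReal_biUnion_inter hdisj]
  obtain ⟨⟨A₀, B₀⟩, -, hmax⟩ := Finset.exists_max_image Finset.univ
    (fun P : Finset (Fin k) × Finset (Fin k) => jumbleRatio u (⋃ i ∈ P.1, S i) (⋃ j ∈ P.2, S j))
    Finset.univ_nonempty
  refine ⟨A₀, B₀, jumbleNorm_eq_jumbleRatio_of_forall_le (hU A₀).1 (hU B₀).1 (hU A₀).2 (hU B₀).2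
    fun X Y hX hY hXI hYI => ?_⟩
  have hcell {Z : Set ℝ} (i : Fin k) : volume.real (Z ∩ S i) ∈ Icc 0 (volume.real (S i)) :=
    ⟨measureReal_nonneg, measureReal_mono inter_subset_right
      (measure_ne_top_of_subset (hcover ▸ subset_iUnion S i) measure_Icc_lt_top.ne)⟩
  obtain ⟨A, B, hAB⟩ := exists_bilinRatio_le_indicator c (hcell (Z := X)) (hcell (Z := Y))
  rw [jumbleRatio_eq_bilinRatio hmeas hdisj hcover hc hX hY hXI hYI]
  exact hAB.trans (hratio A B ▸ hmax (A, B) (Finset.mem_univ _))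
end

section
/- For a nonnegative function f ∈ L^3([0,1]), the functional K(f) := ∫_0^∞ √(λ{x : f(x) ≥ t}) dt satisfies K(f) ≤ 2^{1/3} ‖f‖_3. -/
/-!
Write `m t = λ {f ≥ t}` and let `f* x = λ {t > 0 | m t > x}` be the decreasing rearrangement
of `f`. The layer-cake formula for `√·` turns `K(f) = ∫ √(m t) dt` into
`½ ∫₀¹ f* x · x^(-1/2) dx`, since `f*` vanishes beyond `λ [0,1] = 1`. Hölder's inequality with
exponents `3` and `3/2` bounds this by `½ ‖f*‖₃ (∫₀¹ x^(-3/4) dx)^(2/3) = 2^(1/3) ‖f*‖₃`, and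
`‖f*‖₃ ≤ ‖f‖₃` by the layer-cake formula for the cube, because `λ {f* > s} ≤ λ {f > s}`.
-/

open MeasureTheory Set

/-- The `L^p` norm of a function on `[0,1]`. -/
noncomputable def lpNorm1 (f : ℝ → ℝ) (p : ℝ) : ℝ :=
  (eLpNorm f (ENNReal.ofReal p) (volume.restrict (Icc 0 1))).toReal

open Filter
open scoped ENNReal Topology

lemma lintegral_Ioo_rpow {r : ℝ} (hr : -1 < r) {a : ℝ} (ha : 0 ≤ a) :
    ∫⁻ x in Ioo 0 a, ENNReal.ofReal (x ^ r) = ENNReal.ofReal (a ^ (r + 1) / (r + 1)) := by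
  have hint : IntegrableOn (fun x : ℝ => x ^ r) (Ioo 0 a) :=
    (intervalIntegral.intervalIntegrable_rpow' hr).1.mono_set Ioo_subset_Ioc_self
  rw [← ofReal_integral_eq_lintegral_ofReal hint
      (ae_restrict_of_forall_mem measurableSet_Ioo fun x hx => Real.rpow_nonneg hx.1.le r),
    ← integral_Ioc_eq_integral_Ioo, ← intervalIntegral.integral_of_le ha,
    integral_rpow (Or.inl hr), Real.zero_rpow (by linarith), sub_zero]

section Rearrangement

variable {α : Type*} [MeasurableSpace α] {μ : Measure α} {f : α → ℝ}

noncomputable def distribution (μ : Measure α) (f : α → ℝ) (t : ℝ) : ℝ :=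
  (μ {a | t ≤ f a}).toReal

/-- The decreasing rearrangement `f*` of `f`, on `(0, ∞)`. -/
noncomputable def rearrangement (μ : Measure α) (f : α → ℝ) (x : ℝ) : ℝ≥0∞ :=
  volume.restrict (Ioi 0) {t | x < distribution μ f t}

variable (μ f) in
lemma measurable_distribution : Measurable (distribution μ f) := by
  have : Antitone fun t => μ {a | t ≤ f a} := fun _ _ hst => measure_mono fun _ ha => hst.trans ha
  exact this.measurable.ennreal_toReal

variable (μ f) in
lemma antitone_rearrangement : Antitone (rearrangement μ f) :=
  fun _ _ hxy => measure_mono fun _ ht => hxy.trans_lt ht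

variable (μ f) in
lemma lintegral_sqrt_distribution :
    ∫⁻ t in Ioi 0, ENNReal.ofReal √(distribution μ f t) =
      ENNReal.ofReal (1 / 2) *
        ∫⁻ x in Ioi 0, rearrangement μ f x * ENNReal.ofReal (x ^ (-(1 / 2) : ℝ)) := by
  simp_rw [Real.sqrt_eq_rpow]
  rw [lintegral_rpow_eq_lintegral_meas_lt_mul (f := distribution μ f) _
    (ae_of_all _ fun _ => ENNReal.toReal_nonneg) (measurable_distribution μ f).aemeasurable
    one_half_pos]
  norm_num [rearrangement]

lemma rearrangement_eq_zero [IsFiniteMeasure μ] {x : ℝ} (hx : (μ univ).toReal ≤ x) :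
    rearrangement μ f x = 0 := by
  have : {t | x < distribution μ f t} = ∅ := eq_empty_of_forall_notMem fun t ht =>
    (hx.trans_lt ht).not_ge
      (ENNReal.toReal_mono (measure_ne_top μ univ) (measure_mono (subset_univ _)))
  simp [rearrangement, this]

lemma rearrangement_lt_top [IsFiniteMeasure μ] (hf : AEMeasurable f μ) {x : ℝ} (hx : 0 < x) :
    rearrangement μ f x < ∞ := by
  have hlim : Tendsto (fun t => μ {a | t ≤ f a}) atTop (𝓝 0) := by
    have hempty : ⋂ t : ℝ, {a | t ≤ f a} = ∅ :=
      iInter_eq_empty_iff.2 fun a => ⟨f a + 1, by simp⟩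
    have hanti : Antitone fun t : ℝ => {a | t ≤ f a} := fun _ _ hst _ ha => hst.trans ha
    simpa [Function.comp_def, hempty] using tendsto_measure_iInter_atTop
      (fun t => nullMeasurableSet_le aemeasurable_const hf) hanti ⟨0, measure_ne_top μ _⟩
  obtain ⟨T, hT⟩ := eventually_atTop.1 (hlim.eventually (gt_mem_nhds (ENNReal.ofReal_pos.2 hx)))
  calc rearrangement μ f x ≤ volume.restrict (Ioi 0) (Iio T) :=
        measure_mono fun t ht => not_le.1 fun hTt =>
          (ENNReal.toReal_lt_of_lt_ofReal (hT t hTt)).not_gt ht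
    _ < ∞ := by
        rw [Measure.restrict_apply' measurableSet_Ioi, Iio_inter_Ioi]
        exact measure_Ioo_lt_top

lemma measure_lt_toReal_rearrangement_le [IsFiniteMeasure μ] {s : ℝ} (hs : 0 ≤ s) :
    volume.restrict (Ioi 0) {x | s < (rearrangement μ f x).toReal} ≤ μ {a | s < f a} := by
  rw [Measure.restrict_apply' measurableSet_Ioi]
  calc volume ({x | s < (rearrangement μ f x).toReal} ∩ Ioi 0)
      ≤ volume (Ioo 0 (μ {a | s < f a}).toReal) := ?_
    _ ≤ μ {a | s < f a} := by
        rw [Real.volume_Ioo, sub_zero]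
        exact ENNReal.ofReal_toReal_le
  refine measure_mono fun x ⟨hxs, hx0⟩ => ⟨hx0, ?_⟩
  obtain ⟨t, ht, hst⟩ : ∃ t, x < distribution μ f t ∧ s < t := by
    by_contra! h
    have : rearrangement μ f x ≤ ENNReal.ofReal s := by
      calc rearrangement μ f x ≤ volume.restrict (Ioi 0) (Iic s) := measure_mono h
        _ = ENNReal.ofReal s := by
            rw [Measure.restrict_apply' measurableSet_Ioi, Iic_inter_Ioi, Real.volume_Ioc,
              sub_zero]
    exact hxs.not_ge (ENNReal.toReal_le_of_le_ofReal hs this)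
  exact ht.trans_le (ENNReal.toReal_mono (measure_ne_top _ _)
    (measure_mono fun a ha => hst.trans_le ha))

lemma lintegral_rearrangement_rpow_le [IsFiniteMeasure μ] (hf0 : 0 ≤ᵐ[μ] f)
    (hf : AEMeasurable f μ) {p : ℝ} (hp : 0 < p) :
    ∫⁻ x in Ioi 0, rearrangement μ f x ^ p ≤ ∫⁻ a, ENNReal.ofReal (f a ^ p) ∂μ := by
  calc ∫⁻ x in Ioi 0, rearrangement μ f x ^ p
      = ∫⁻ x in Ioi 0, ENNReal.ofReal ((rearrangement μ f x).toReal ^ p) := by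
        refine setLIntegral_congr_fun measurableSet_Ioi fun x hx => ?_
        rw [← ENNReal.ofReal_rpow_of_nonneg ENNReal.toReal_nonneg hp.le,
          ENNReal.ofReal_toReal (rearrangement_lt_top hf hx).ne]
    _ = ENNReal.ofReal p * ∫⁻ s in Ioi 0,
          volume.restrict (Ioi 0) {x | s < (rearrangement μ f x).toReal} *
            ENNReal.ofReal (s ^ (p - 1)) :=
        lintegral_rpow_eq_lintegral_meas_lt_mul _ (ae_of_all _ fun _ => ENNReal.toReal_nonneg)
          (antitone_rearrangement μ f).measurable.ennreal_toReal.aemeasurable hp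
    _ ≤ ENNReal.ofReal p * ∫⁻ s in Ioi 0, μ {a | s < f a} * ENNReal.ofReal (s ^ (p - 1)) := by
        gcongr ENNReal.ofReal p * ?_
        exact setLIntegral_mono' measurableSet_Ioi fun s hs =>
          mul_le_mul_left (measure_lt_toReal_rearrangement_le (le_of_lt hs)) _
    _ = ∫⁻ a, ENNReal.ofReal (f a ^ p) ∂μ :=
        (lintegral_rpow_eq_lintegral_meas_lt_mul μ hf0 hf hp).symm

lemma setLIntegral_Ioi_rearrangement_mul [IsFiniteMeasure μ] (g : ℝ → ℝ≥0∞) :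
    ∫⁻ x in Ioi 0, rearrangement μ f x * g x =
      ∫⁻ x in Ioo 0 (μ univ).toReal, rearrangement μ f x * g x := by
  have hzero : ∫⁻ x in Ioi 0 \ Iio (μ univ).toReal, rearrangement μ f x * g x = 0 := by
    refine (setLIntegral_congr_fun (measurableSet_Ioi.diff measurableSet_Iio)
      fun x hx => ?_).trans lintegral_zero
    rw [rearrangement_eq_zero (not_lt.1 hx.2), zero_mul]
  rw [← lintegral_inter_add_sdiff _ _ measurableSet_Iio, hzero, add_zero, Ioi_inter_Iio]

lemma rpow_lintegral_rearrangement_rpow_le_eLpNorm [IsFiniteMeasure μ] (hf0 : 0 ≤ᵐ[μ] f)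
    (hf : AEMeasurable f μ) {p : ℝ} (hp : 0 < p) :
    (∫⁻ x in Ioi 0, rearrangement μ f x ^ p) ^ (1 / p) ≤ eLpNorm f (ENNReal.ofReal p) μ := by
  rw [eLpNorm_eq_lintegral_rpow_enorm_toReal (by simpa using hp) ENNReal.ofReal_ne_top,
    ENNReal.toReal_ofReal hp.le]
  gcongr
  refine (lintegral_rearrangement_rpow_le hf0 hf hp).trans_eq (lintegral_congr_ae ?_)
  filter_upwards [hf0] with a ha
  rw [Real.enorm_of_nonneg ha, ENNReal.ofReal_rpow_of_nonneg ha hp.le]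

lemma lintegral_sqrt_distribution_le [IsProbabilityMeasure μ] (hf0 : 0 ≤ᵐ[μ] f)
    (hf : AEMeasurable f μ) :
    ∫⁻ t in Ioi 0, ENNReal.ofReal √(distribution μ f t) ≤
      ENNReal.ofReal (2 ^ (1 / 3 : ℝ)) * eLpNorm f 3 μ := by
  set w : ℝ → ℝ≥0∞ := fun x => ENNReal.ofReal (x ^ (-(1 / 2) : ℝ))
  have hw : ∫⁻ x in Ioo 0 1, w x ^ (3 / 2 : ℝ) = 4 := by
    calc ∫⁻ x in Ioo 0 1, w x ^ (3 / 2 : ℝ)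
        = ∫⁻ x in Ioo 0 1, ENNReal.ofReal (x ^ (-(3 / 4) : ℝ)) := by
          refine setLIntegral_congr_fun measurableSet_Ioo fun x hx => ?_
          rw [ENNReal.ofReal_rpow_of_nonneg (Real.rpow_nonneg hx.1.le _) (by norm_num),
            ← Real.rpow_mul hx.1.le]
          norm_num
      _ = 4 := by rw [lintegral_Ioo_rpow (by norm_num) zero_le_one]; norm_num
  have hconst : (1 / 2 : ℝ) * 4 ^ (2 / 3 : ℝ) = 2 ^ (1 / 3 : ℝ) := by
    rw [show (4 : ℝ) = 2 ^ (2 : ℝ) by norm_num, ← Real.rpow_mul zero_le_two,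
      show (1 / 2 : ℝ) = 2 ^ (-1 : ℝ) by norm_num, ← Real.rpow_add zero_lt_two]
    norm_num
  calc ∫⁻ t in Ioi 0, ENNReal.ofReal √(distribution μ f t)
      = ENNReal.ofReal (1 / 2) * ∫⁻ x in Ioo 0 1, (rearrangement μ f * w) x := by
        rw [lintegral_sqrt_distribution, setLIntegral_Ioi_rearrangement_mul, measure_univ,
          ENNReal.toReal_one]
        rfl
    _ ≤ ENNReal.ofReal (1 / 2) * ((∫⁻ x in Ioo 0 1, rearrangement μ f x ^ (3 : ℝ)) ^ (1 / 3 : ℝ) *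
          (∫⁻ x in Ioo 0 1, w x ^ (3 / 2 : ℝ)) ^ (1 / (3 / 2) : ℝ)) := by
        gcongr
        exact ENNReal.lintegral_mul_le_Lp_mul_Lq _ ⟨by norm_num, by norm_num, by norm_num⟩
          (antitone_rearrangement μ f).measurable.aemeasurable (by fun_prop)
    _ ≤ ENNReal.ofReal (1 / 2) * (eLpNorm f 3 μ * 4 ^ (2 / 3 : ℝ)) := by
        rw [hw, show (1 / (3 / 2) : ℝ) = 2 / 3 by norm_num, ← ENNReal.ofReal_ofNat 3]
        gcongr
        refine le_trans ?_ (rpow_lintegral_rearrangement_rpow_le_eLpNorm hf0 hf three_pos)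
        gcongr
        exact Ioo_subset_Ioi_self
    _ = ENNReal.ofReal (2 ^ (1 / 3 : ℝ)) * eLpNorm f 3 μ := by
        rw [← hconst, ENNReal.ofReal_mul (by norm_num),
          ← ENNReal.ofReal_rpow_of_nonneg (by norm_num) (by norm_num), ENNReal.ofReal_ofNat]
        ring

end Rearrangement

theorem K_le_L3 (f : ℝ → ℝ) (hf0 : ∀ x, 0 ≤ f x)
    (hf : MemLp f 3 (volume.restrict (Icc 0 1))) :
    (∫ t in Ioi (0:ℝ), Real.sqrt ((volume {x ∈ Icc (0:ℝ) 1 | t ≤ f x}).toReal)) ≤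
      (2:ℝ) ^ ((1:ℝ)/3) * lpNorm1 f 3 := by
  set μ := volume.restrict (Icc (0 : ℝ) 1)
  have : IsProbabilityMeasure μ := ⟨by simp [μ]⟩
  have hdist (t : ℝ) : volume {x ∈ Icc (0 : ℝ) 1 | t ≤ f x} = μ {x | t ≤ f x} := by
    rw [Measure.restrict_apply' measurableSet_Icc, inter_comm, inter_ofPred_eq_sep]
  simp_rw [hdist]
  change ∫ t in Ioi 0, √(distribution μ f t) ≤ _
  rw [integral_eq_lintegral_of_nonneg_ae (ae_of_all _ fun _ => Real.sqrt_nonneg _)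
      (measurable_distribution μ f).sqrt.aestronglyMeasurable,
    lpNorm1, ENNReal.ofReal_ofNat,
    ← ENNReal.toReal_ofReal (by positivity : (0 : ℝ) ≤ 2 ^ (1 / 3 : ℝ)), ← ENNReal.toReal_mul]
  exact ENNReal.toReal_mono (ENNReal.mul_ne_top ENNReal.ofReal_ne_top hf.2.ne)
    (lintegral_sqrt_distribution_le (ae_of_all _ hf0) hf.1.aemeasurable)
end

section
/- Let u, w ∈ L^l([0,1]^2) be symmetric, and let F be a simple graph with l ≥ 1 edges. Then |t(F,u) − t(F,w)| ≤ l ‖u−w‖_l max(‖u‖_l, ‖w‖_l)^{l−1}, where t(F,u) = ∫_{[0,1]^{V(F)}} ∏_{ij∈E(F)} u(x_i,x_j) dx. -/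
open MeasureTheory Set

/-- The `L^p` norm of a function on `[0,1]²`. -/
noncomputable def lpNorm2 (u : ℝ × ℝ → ℝ) (p : ℝ) : ℝ :=
  (eLpNorm u (ENNReal.ofReal p) (volume.restrict (Icc 0 1 ×ˢ Icc 0 1))).toReal

/-- Homomorphism density `t(F,u)` of a simple graph with vertex set `Fin k` and edge set
`E` (edges as ordered pairs `(i,j)` with `i < j`) in a kernel `u`. -/
noncomputable def homDensity (k : ℕ) (E : Finset (Fin k × Fin k)) (u : ℝ × ℝ → ℝ) : ℝ :=
  ∫ x : Fin k → ℝ, ∏ e ∈ E, u (x e.1, x e.2)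
    ∂(Measure.pi fun _ : Fin k => volume.restrict (Icc 0 1))

/-!
Telescoping, `∏ f - ∏ g = ∑ᵢ (∏_{j<i} f j) (f i - g i) (∏_{j>i} g j)`, writes
`t(F,u) - t(F,w)` as a sum of `l` integrals of products of `l` factors, each factor being
`u`, `w` or `u - w` evaluated at the two endpoints of an edge. Since an edge joins two distinct
vertices, each factor has the same `L^l` norm as the kernel it comes from, and Hölder's inequality
with `l` exponents equal to `l` bounds each integral by `‖u - w‖_l max(‖u‖_l, ‖w‖_l)^(l-1)`.
-/

section Telescoping

variable {ι R : Type*} [CommRing R] [LinearOrder ι]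

def hybrid (f g : ι → R) (i j : ι) : R :=
  if j < i then f j else if j = i then f j - g j else g j

namespace Finset

theorem prod_sub_prod_eq_sum_prod_hybrid (s : Finset ι) (f g : ι → R) :
    ∏ i ∈ s, f i - ∏ i ∈ s, g i = ∑ i ∈ s, ∏ j ∈ s, hybrid f g i j := by
  have h := prod_add_ordered s g (f - g)
  simp only [Pi.sub_apply, add_sub_cancel] at h
  rw [h, add_sub_cancel_left]
  refine sum_congr rfl fun i hi => ?_
  have hsplit : {j ∈ s | ¬j < i} = insert i {j ∈ s | i < j} := by
    ext j; simp only [mem_filter, mem_insert, not_lt]; grind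
  have hlt : ∏ j ∈ s with j < i, hybrid f g i j = ∏ j ∈ s with j < i, f j :=
    prod_congr rfl fun j hj => if_pos (mem_filter.1 hj).2
  have hgt : ∏ j ∈ s with i < j, hybrid f g i j = ∏ j ∈ s with i < j, g j :=
    prod_congr rfl fun j hj => by
      have hij := (mem_filter.1 hj).2
      simp [hybrid, hij.not_gt, hij.ne']
  rw [← prod_filter_mul_prod_filter_not s (· < i), hsplit, prod_insert (by simp), hlt, hgt]
  simp only [hybrid, lt_irrefl, if_false, if_true]
  ring

end Finset

end Telescoping

section Holder

open Finset

variable {α ι : Type*} [MeasurableSpace α] {μ : Measure α} {s : Finset ι}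

theorem lintegral_enorm_prod_le_prod_eLpNorm {h : ι → α → ℝ} (hs : s.Nonempty)
    (hh : ∀ i ∈ s, AEStronglyMeasurable (h i) μ) :
    ∫⁻ x, ‖∏ i ∈ s, h i x‖ₑ ∂μ ≤ ∏ i ∈ s, eLpNorm (h i) #s μ := by
  have hn : (#s : ℝ) ≠ 0 := by positivity
  calc ∫⁻ x, ‖∏ i ∈ s, h i x‖ₑ ∂μ
      = ∫⁻ x, ∏ i ∈ s, (‖h i x‖ₑ ^ (#s : ℝ)) ^ (#s : ℝ)⁻¹ ∂μ := by
        refine lintegral_congr fun x => ?_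
        simp only [ENNReal.rpow_rpow_inv hn, enorm_eq_nnnorm, nnnorm_prod,
          ENNReal.ofNNReal_finsetProd]
    _ ≤ ∏ i ∈ s, (∫⁻ x, ‖h i x‖ₑ ^ (#s : ℝ) ∂μ) ^ (#s : ℝ)⁻¹ :=
        ENNReal.lintegral_prod_norm_pow_le s (fun i hi => (hh i hi).enorm.pow_const _)
          (by simp [hn]) (by simp)
    _ = ∏ i ∈ s, eLpNorm (h i) #s μ := by
        simp [eLpNorm_eq_lintegral_rpow_enorm_toReal, hs.ne_empty]

theorem integrable_prod_of_memLp {h : ι → α → ℝ} (hs : s.Nonempty)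
    (hh : ∀ i ∈ s, MemLp (h i) #s μ) :
    Integrable (fun x => ∏ i ∈ s, h i x) μ :=
  ⟨Finset.aestronglyMeasurable_fun_prod _ fun i hi => (hh i hi).1,
    (lintegral_enorm_prod_le_prod_eLpNorm hs fun i hi => (hh i hi).1).trans_lt <|
      ENNReal.prod_lt_top fun i hi => (hh i hi).eLpNorm_lt_top⟩

theorem abs_integral_prod_le_prod_eLpNorm {h : ι → α → ℝ} (hs : s.Nonempty)
    (hh : ∀ i ∈ s, MemLp (h i) #s μ) :
    |∫ x, ∏ i ∈ s, h i x ∂μ| ≤ ∏ i ∈ s, (eLpNorm (h i) #s μ).toReal := by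
  rw [← ENNReal.toReal_prod, ← Real.norm_eq_abs, ← toReal_enorm]
  refine ENNReal.toReal_mono (ENNReal.prod_lt_top fun i hi => (hh i hi).eLpNorm_lt_top).ne ?_
  exact (enorm_integral_le_lintegral_enorm _).trans
    (lintegral_enorm_prod_le_prod_eLpNorm hs fun i hi => (hh i hi).1)

theorem abs_integral_prod_sub_integral_prod_le {f g : ι → α → ℝ} {δ A : ℝ}
    (hf : ∀ i ∈ s, MemLp (f i) #s μ) (hg : ∀ i ∈ s, MemLp (g i) #s μ)
    (hδ : ∀ i ∈ s, (eLpNorm (f i - g i) #s μ).toReal ≤ δ)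
    (hfA : ∀ i ∈ s, (eLpNorm (f i) #s μ).toReal ≤ A)
    (hgA : ∀ i ∈ s, (eLpNorm (g i) #s μ).toReal ≤ A) :
    |∫ x, ∏ i ∈ s, f i x ∂μ - ∫ x, ∏ i ∈ s, g i x ∂μ| ≤ #s * δ * A ^ (#s - 1) := by
  rcases s.eq_empty_or_nonempty with rfl | hs
  · simp
  -- any linear order on the index type will do for the telescoping
  let _ : LinearOrder ι := IsWellOrder.linearOrder WellOrderingRel
  have hmem : ∀ i ∈ s, ∀ j ∈ s, MemLp (hybrid f g i j) #s μ := by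
    intro i _ j hj
    unfold hybrid
    split_ifs
    exacts [hf j hj, (hf j hj).sub (hg j hj), hg j hj]
  have hnorm : ∀ i ∈ s, ∀ j ∈ s,
      (eLpNorm (hybrid f g i j) #s μ).toReal ≤ if j = i then δ else A := by
    intro i _ j hj
    rcases lt_trichotomy j i with hlt | rfl | hgt
    · simpa [hybrid, hlt, hlt.ne] using hfA j hj
    · simpa [hybrid] using hδ j hj
    · simpa [hybrid, hgt.not_gt, hgt.ne'] using hgA j hj
  have hterm : ∀ i ∈ s, |∫ x, ∏ j ∈ s, hybrid f g i j x ∂μ| ≤ δ * A ^ (#s - 1) := by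
    intro i hi
    calc |∫ x, ∏ j ∈ s, hybrid f g i j x ∂μ|
        ≤ ∏ j ∈ s, (eLpNorm (hybrid f g i j) #s μ).toReal :=
          abs_integral_prod_le_prod_eLpNorm hs (hmem i hi)
      _ ≤ ∏ j ∈ s, if j = i then δ else A :=
          prod_le_prod (fun _ _ => ENNReal.toReal_nonneg) (hnorm i hi)
      _ = δ * A ^ (#s - 1) := by
          rw [← mul_prod_erase s _ hi, if_pos rfl,
            prod_congr rfl fun j hj => if_neg (ne_of_mem_erase hj), prod_const,
            card_erase_of_mem hi]
  calc |∫ x, ∏ i ∈ s, f i x ∂μ - ∫ x, ∏ i ∈ s, g i x ∂μ|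
      = |∑ i ∈ s, ∫ x, ∏ j ∈ s, hybrid f g i j x ∂μ| := by
        rw [← integral_sub (integrable_prod_of_memLp hs hf) (integrable_prod_of_memLp hs hg),
          ← integral_finsetSum _ fun i hi => integrable_prod_of_memLp hs (hmem i hi)]
        congr 2 with x
        simpa only [Finset.prod_apply, Finset.sum_apply, Pi.sub_apply] using
          congr_fun (prod_sub_prod_eq_sum_prod_hybrid s f g) x
    _ ≤ ∑ i ∈ s, |∫ x, ∏ j ∈ s, hybrid f g i j x ∂μ| := abs_sum_le_sum_abs _ _
    _ ≤ ∑ _i ∈ s, δ * A ^ (#s - 1) := sum_le_sum hterm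
    _ = #s * δ * A ^ (#s - 1) := by rw [sum_const, nsmul_eq_mul, mul_assoc]

end Holder

theorem measurePreserving_eval_pair {ι Ω : Type*} [Fintype ι] [MeasurableSpace Ω]
    (μ : Measure Ω) [IsProbabilityMeasure μ] {i j : ι} (hij : i ≠ j) :
    MeasurePreserving (fun x : ι → Ω => (x i, x j)) (Measure.pi fun _ => μ) (μ.prod μ) := by
  have hind : ProbabilityTheory.IndepFun (fun x : ι → Ω => x i) (fun x => x j)
      (Measure.pi fun _ => μ) :=
    (ProbabilityTheory.iIndepFun_pi (X := fun _ => id) fun _ => aemeasurable_id).indepFun hij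
  refine ⟨by fun_prop, ?_⟩
  rw [hind.map_prod_eq_prod_map_map (measurable_pi_apply i).aemeasurable
    (measurable_pi_apply j).aemeasurable]
  exact congr_arg₂ _ (measurePreserving_eval _ i).map_eq (measurePreserving_eval _ j).map_eq

theorem counting_lemma_Lp_general (k l : ℕ)
    (E : Finset (Fin k × Fin k)) (hE : ∀ e ∈ E, e.1 < e.2) (hcard : E.card = l)
    (u w : ℝ × ℝ → ℝ)
    (hu : MemLp u (l : ENNReal) (volume.restrict (Icc 0 1 ×ˢ Icc 0 1)))
    (hw : MemLp w (l : ENNReal) (volume.restrict (Icc 0 1 ×ˢ Icc 0 1))) :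
    |homDensity k E u - homDensity k E w| ≤
      l * lpNorm2 (fun p => u p - w p) l * max (lpNorm2 u l) (lpNorm2 w l) ^ (l - 1) := by
  subst hcard
  let μ := volume.restrict (Icc (0 : ℝ) 1)
  have : IsProbabilityMeasure μ := ⟨by simp [μ]⟩
  have hμ : μ.prod μ = volume.restrict (Icc 0 1 ×ˢ Icc 0 1) := by
    rw [Measure.prod_restrict, ← Measure.volume_eq_prod]
  rw [← hμ] at hu hw
  have hpair (e) (he : e ∈ E) : MeasurePreserving (fun x : Fin k → ℝ => (x e.1, x e.2))
      (Measure.pi fun _ => μ) (μ.prod μ) :=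
    measurePreserving_eval_pair μ (hE e he).ne
  have hnorm {v : ℝ × ℝ → ℝ} (hv : MemLp v E.card (μ.prod μ)) (e) (he : e ∈ E) :
      (eLpNorm (fun x : Fin k → ℝ => v (x e.1, x e.2)) E.card (Measure.pi fun _ => μ)).toReal
        = (eLpNorm v E.card (μ.prod μ)).toReal :=
    congrArg ENNReal.toReal (eLpNorm_comp_measurePreserving hv.1 (hpair e he))
  simp only [homDensity, lpNorm2, ENNReal.ofReal_natCast, ← hμ]
  exact abs_integral_prod_sub_integral_prod_le
    (fun e he => hu.comp_measurePreserving (hpair e he))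
    (fun e he => hw.comp_measurePreserving (hpair e he))
    (fun e he => (hnorm (hu.sub hw) e he).le)
    (fun e he => (hnorm hu e he).trans_le (le_max_left _ _))
    (fun e he => (hnorm hw e he).trans_le (le_max_right _ _))

theorem counting_lemma_Lp (k l : ℕ) (hl : 1 ≤ l)
    (E : Finset (Fin k × Fin k)) (hE : ∀ e ∈ E, e.1 < e.2) (hcard : E.card = l)
    (u w : ℝ × ℝ → ℝ)
    (hu : MemLp u (l : ENNReal) (volume.restrict (Icc 0 1 ×ˢ Icc 0 1)))
    (hw : MemLp w (l : ENNReal) (volume.restrict (Icc 0 1 ×ˢ Icc 0 1)))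
    (husym : ∀ x y : ℝ, u (x, y) = u (y, x))
    (hwsym : ∀ x y : ℝ, w (x, y) = w (y, x)) :
    |homDensity k E u - homDensity k E w| ≤
      l * lpNorm2 (fun p => u p - w p) l * max (lpNorm2 u l) (lpNorm2 w l) ^ (l - 1) :=
  counting_lemma_Lp_general k l E hE hcard u w hu hw
end

section
/- A family M of probability distributions on ℕ is moment-bounded (for every p ≥ 1 there is c_p with Σ_m μ(m) m^p < c_p for all μ ∈ M) if and only if there exists a weight function ρ : ℕ → (0,∞) with Σ_m ρ(m) m^p < ∞ for every p ≥ 0, such that for every p ≥ 1 there is c'_p with Σ_m μ(m) / ρ(m)^p < c'_p for all μ ∈ M. -/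
/-!
Backward direction: splitting at `ρ x = 1` gives `x ^ p ≤ ρ ^ (-p) + ρ x ^ (p + 1)`; multiplying
by `μ m ≤ 1` bounds the `p`-th moment by the smoothness sum plus the weighted sum `Σ ρ m m ^ (p + 1)`.

Forward direction: the moment bounds give `μ m (m + 1) ^ j ≤ C j` for every `j`, uniformly in `μ`.
Take `ρ m = (m + 1) ^ (-a m)` where `a m → ∞` so slowly that `C (k * k + 3) ≤ m` for `k = a m`.
Since `a m → ∞`, `ρ` decays faster than every power of `m`; and once `a m ≥ p`, the spare factor
`m + 1` in `μ m (m + 1) ^ (a m * a m + 3) ≤ m` yields `μ m / ρ m ^ p ≤ (m + 1) ^ (-2)`.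
-/

open Filter

def MomentBounded (M : Set (ℕ → ℝ)) : Prop :=
  ∀ p : ℕ, 1 ≤ p → ∃ c : ℝ, ∀ μ ∈ M,
    Summable (fun m : ℕ => μ m * (m : ℝ) ^ p) ∧ ∑' m : ℕ, μ m * (m : ℝ) ^ p < c

def IsWeight (ρ : ℕ → ℝ) : Prop :=
  (∀ m, 0 < ρ m) ∧ ∀ p : ℕ, Summable (fun m : ℕ => ρ m * (m : ℝ) ^ p)

def IsSmooth (ρ : ℕ → ℝ) (M : Set (ℕ → ℝ)) : Prop :=
  ∀ p : ℕ, 1 ≤ p → ∃ c : ℝ, ∀ μ ∈ M,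
    Summable (fun m : ℕ => μ m / ρ m ^ p) ∧ ∑' m : ℕ, μ m / ρ m ^ p < c

lemma pow_le_inv_pow_add_mul_pow_succ {K : Type*} [Field K] [LinearOrder K]
    [IsStrictOrderedRing K] {ρ x : K} (hρ : 0 < ρ) (hx : 0 ≤ x) (p : ℕ) :
    x ^ p ≤ (ρ ^ p)⁻¹ + ρ * x ^ (p + 1) := by
  rcases le_total (ρ * x) 1 with h | h
  · refine le_add_of_le_of_nonneg ?_ (by positivity)
    calc x ^ p = (ρ ^ p)⁻¹ * (ρ * x) ^ p := by
          rw [mul_pow, inv_mul_cancel_left₀ (pow_ne_zero _ hρ.ne')]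
      _ ≤ (ρ ^ p)⁻¹ * 1 := by gcongr; exact pow_le_one₀ (by positivity) h
      _ = (ρ ^ p)⁻¹ := mul_one _
  · refine le_add_of_nonneg_of_le (by positivity) ?_
    calc x ^ p ≤ x ^ p * (ρ * x) := le_mul_of_one_le_right (by positivity) h
      _ = ρ * x ^ (p + 1) := by ring

lemma exists_forall_summable_tsum_lt {ι β : Type*} {s : Set ι} {f : ι → β → ℝ} {g : β → ℝ}
    (hg : Summable g) (hf0 : ∀ i ∈ s, ∀ b, 0 ≤ f i b) (hfg : ∀ i ∈ s, ∀ b, f i b ≤ g b) :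
    ∃ c, ∀ i ∈ s, Summable (f i) ∧ ∑' b, f i b < c := by
  refine ⟨∑' b, g b + 1, fun i hi => ?_⟩
  have hs : Summable (f i) := Summable.of_nonneg_of_le (hf0 i hi) (hfg i hi) hg
  exact ⟨hs, (hs.tsum_le_tsum (hfg i hi) hg).trans_lt (lt_add_one _)⟩

lemma exists_forall_le_of_eventually_le {ι : Type*} {s : Set ι} {f : ι → ℕ → ℝ}
    (hpt : ∀ m, ∃ c, ∀ i ∈ s, f i m ≤ c) {c : ℝ} (hev : ∀ᶠ m in atTop, ∀ i ∈ s, f i m ≤ c) :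
    ∃ K, ∀ i ∈ s, ∀ m, f i m ≤ K := by
  choose b hb using hpt
  obtain ⟨N, hN⟩ := eventually_atTop.1 hev
  refine ⟨max c (∑ m ∈ Finset.range N, |b m|), fun i hi m => ?_⟩
  rcases lt_or_ge m N with hm | hm
  · calc f i m ≤ |b m| := (hb m i hi).trans (le_abs_self _)
      _ ≤ ∑ m ∈ Finset.range N, |b m| :=
        Finset.single_le_sum (fun k _ => abs_nonneg (b k)) (Finset.mem_range.2 hm)
      _ ≤ _ := le_max_right _ _
  · exact (hN m hm i hi).trans (le_max_left _ _)

lemma exists_tendsto_atTop_eventually_le (B : ℕ → ℝ) :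
    ∃ a : ℕ → ℕ, Tendsto a atTop atTop ∧ ∀ᶠ m in atTop, B (a m) ≤ m := by
  classical
  refine ⟨fun m => Nat.findGreatest (fun k => B k ≤ m) m, tendsto_atTop.2 fun k => ?_, ?_⟩
  · filter_upwards [eventually_ge_atTop k,
      tendsto_natCast_atTop_atTop.eventually_ge_atTop (B k)] with m hkm hBm
    exact Nat.le_findGreatest hkm hBm
  · filter_upwards [tendsto_natCast_atTop_atTop.eventually_ge_atTop (B 0)] with m hBm
    exact Nat.findGreatest_spec (P := fun k => B k ≤ m) m.zero_le hBm

lemma summable_inv_succ_sq : Summable fun m : ℕ => (((m : ℝ) + 1) ^ 2)⁻¹ := by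
  simpa using (summable_nat_add_iff 1).2 (Real.summable_one_div_nat_pow.2 one_lt_two)

section

variable {M : Set (ℕ → ℝ)} (h0 : ∀ μ ∈ M, ∀ m, 0 ≤ μ m) (h1 : ∀ μ ∈ M, ∀ m, μ m ≤ 1)
include h0 h1

theorem MomentBounded.of_isSmooth {ρ : ℕ → ℝ} (hρ : IsWeight ρ)
    (hsmooth : IsSmooth ρ M) : MomentBounded M := by
  intro p hp
  obtain ⟨c, hc⟩ := hsmooth p hp
  refine ⟨c + ∑' m : ℕ, ρ m * (m : ℝ) ^ (p + 1), fun μ hμ => ?_⟩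
  obtain ⟨hs, hlt⟩ := hc μ hμ
  have hmaj : Summable fun m : ℕ => μ m / ρ m ^ p + ρ m * (m : ℝ) ^ (p + 1) :=
    hs.add (hρ.2 (p + 1))
  have hle (m : ℕ) : μ m * (m : ℝ) ^ p ≤ μ m / ρ m ^ p + ρ m * (m : ℝ) ^ (p + 1) :=
    calc μ m * (m : ℝ) ^ p ≤ μ m * ((ρ m ^ p)⁻¹ + ρ m * (m : ℝ) ^ (p + 1)) :=
          mul_le_mul_of_nonneg_left
            (pow_le_inv_pow_add_mul_pow_succ (hρ.1 m) m.cast_nonneg p) (h0 μ hμ m)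
      _ ≤ μ m / ρ m ^ p + ρ m * (m : ℝ) ^ (p + 1) := by
        have : 0 ≤ ρ m * (m : ℝ) ^ (p + 1) := mul_nonneg (hρ.1 m).le (by positivity)
        rw [mul_add, ← div_eq_mul_inv]
        exact add_le_add_right (mul_le_of_le_one_left this (h1 μ hμ m)) _
  have hsum : Summable fun m : ℕ => μ m * (m : ℝ) ^ p :=
    Summable.of_nonneg_of_le (fun m => mul_nonneg (h0 μ hμ m) (by positivity)) hle hmaj
  refine ⟨hsum, ?_⟩
  calc ∑' m : ℕ, μ m * (m : ℝ) ^ p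
      ≤ ∑' m : ℕ, (μ m / ρ m ^ p + ρ m * (m : ℝ) ^ (p + 1)) := hsum.tsum_le_tsum hle hmaj
    _ = ∑' m : ℕ, μ m / ρ m ^ p + ∑' m : ℕ, ρ m * (m : ℝ) ^ (p + 1) := hs.tsum_add (hρ.2 _)
    _ < c + ∑' m : ℕ, ρ m * (m : ℝ) ^ (p + 1) := by linarith

theorem MomentBounded.exists_mul_succ_pow_le (hM : MomentBounded M) :
    ∃ C : ℕ → ℝ, ∀ j, ∀ μ ∈ M, ∀ m : ℕ, μ m * ((m : ℝ) + 1) ^ j ≤ C j := by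
  choose c hc using fun j : ℕ => hM (j + 1) (Nat.le_add_left 1 j)
  refine ⟨fun j => 2 ^ j * (c j + 1), fun j μ hμ m => ?_⟩
  obtain ⟨hs, hlt⟩ := hc j μ hμ
  have hμ0 := h0 μ hμ
  have hmoment : μ m * (m : ℝ) ^ (j + 1) ≤ c j :=
    (hs.le_tsum m fun i _ => mul_nonneg (hμ0 i) (by positivity)).trans hlt.le
  have hm1 : (1 : ℝ) ≤ m + 1 := le_add_of_nonneg_left m.cast_nonneg
  calc μ m * ((m : ℝ) + 1) ^ j ≤ μ m * ((m : ℝ) + 1) ^ (j + 1) :=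
        mul_le_mul_of_nonneg_left (pow_le_pow_right₀ hm1 j.le_succ) (hμ0 m)
    _ ≤ μ m * (2 ^ j * ((m : ℝ) ^ (j + 1) + 1)) := by
        gcongr
        · exact hμ0 m
        · simpa using add_pow_le m.cast_nonneg (zero_le_one' ℝ) (j + 1)
    _ = 2 ^ j * (μ m * (m : ℝ) ^ (j + 1) + μ m) := by ring
    _ ≤ 2 ^ j * (c j + 1) := by gcongr; exact h1 μ hμ m

end

noncomputable def invSuccPow (a : ℕ → ℕ) (m : ℕ) : ℝ := (((m : ℝ) + 1) ^ a m)⁻¹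

lemma isWeight_invSuccPow {a : ℕ → ℕ} (ha : Tendsto a atTop atTop) : IsWeight (invSuccPow a) := by
  refine ⟨fun m => by unfold invSuccPow; positivity, fun q => ?_⟩
  refine summable_inv_succ_sq.of_norm_bounded_eventually_nat ?_
  filter_upwards [ha.eventually_ge_atTop (q + 2)] with m hm
  have hm1 : (1 : ℝ) ≤ m + 1 := le_add_of_nonneg_left m.cast_nonneg
  rw [Real.norm_of_nonneg (by unfold invSuccPow; positivity), invSuccPow,
    inv_mul_le_iff₀ (by positivity)]
  calc (m : ℝ) ^ q ≤ ((m : ℝ) + 1) ^ q := by gcongr; linarith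
    _ = ((m : ℝ) + 1) ^ (q + 2) * (((m : ℝ) + 1) ^ 2)⁻¹ := by field_simp; ring
    _ ≤ ((m : ℝ) + 1) ^ a m * (((m : ℝ) + 1) ^ 2)⁻¹ := by gcongr

lemma isSmooth_invSuccPow {M : Set (ℕ → ℝ)} (h0 : ∀ μ ∈ M, ∀ m, 0 ≤ μ m) {C : ℕ → ℝ}
    (hC : ∀ j, ∀ μ ∈ M, ∀ m : ℕ, μ m * ((m : ℝ) + 1) ^ j ≤ C j) {a : ℕ → ℕ}
    (ha : Tendsto a atTop atTop) (haC : ∀ᶠ m in atTop, C (a m * a m + 3) ≤ m) :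
    IsSmooth (invSuccPow a) M := by
  intro p _
  have hev : ∀ᶠ m in atTop, ∀ μ ∈ M, μ m * ((m : ℝ) + 1) ^ (a m * p + 2) ≤ 1 := by
    filter_upwards [ha.eventually_ge_atTop p, haC] with m hp hCm μ hμ
    have hm1 : (1 : ℝ) ≤ m + 1 := le_add_of_nonneg_left m.cast_nonneg
    have hexp : a m * p + 2 + 1 ≤ a m * a m + 3 := by
      have := Nat.mul_le_mul_left (a m) hp
      omega
    have : μ m * ((m : ℝ) + 1) ^ (a m * p + 2) * (m + 1) ≤ 1 * (m + 1) :=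
      calc _ = μ m * ((m : ℝ) + 1) ^ (a m * p + 2 + 1) := by ring
        _ ≤ μ m * ((m : ℝ) + 1) ^ (a m * a m + 3) := by
          gcongr
          exact h0 μ hμ m
        _ ≤ m := (hC _ μ hμ m).trans hCm
        _ ≤ 1 * (m + 1) := by linarith
    exact le_of_mul_le_mul_right this (by positivity)
  obtain ⟨K, hK⟩ :=
    exists_forall_le_of_eventually_le (fun m => ⟨C (a m * p + 2), fun μ hμ => hC _ μ hμ m⟩) hev
  refine exists_forall_summable_tsum_lt (summable_inv_succ_sq.mul_left K)
    (fun μ hμ m => ?_) (fun μ hμ m => ?_)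
  · have := h0 μ hμ m
    unfold invSuccPow
    positivity
  · rw [invSuccPow, inv_pow, div_inv_eq_mul, ← pow_mul, ← div_eq_mul_inv,
      le_div_iff₀ (by positivity), mul_assoc, ← pow_add]
    exact hK μ hμ m

/-- A family `M` of probability distributions on `ℕ` is moment-bounded if and only if
there exists a weight function `ρ` (strictly positive, with all weighted power sums
`Σ ρ(m) m^p` finite) such that `M` is `ρ`-smooth. -/
theorem moment_bounded_iff_smooth (M : Set (ℕ → ℝ))
    (hM : ∀ μ ∈ M, (∀ m, 0 ≤ μ m) ∧ Summable μ ∧ ∑' m, μ m = 1) :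
    (∀ p : ℕ, 1 ≤ p → ∃ c : ℝ, ∀ μ ∈ M,
        Summable (fun m : ℕ => μ m * (m : ℝ) ^ p) ∧ ∑' m : ℕ, μ m * (m : ℝ) ^ p < c) ↔
      (∃ ρ : ℕ → ℝ, (∀ m, 0 < ρ m) ∧
        (∀ p : ℕ, Summable (fun m : ℕ => ρ m * (m : ℝ) ^ p)) ∧
        (∀ p : ℕ, 1 ≤ p → ∃ c' : ℝ, ∀ μ ∈ M,
          Summable (fun m : ℕ => μ m / ρ m ^ p) ∧ ∑' m : ℕ, μ m / ρ m ^ p < c')) := by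
  have h0 : ∀ μ ∈ M, ∀ m, 0 ≤ μ m := fun μ hμ => (hM μ hμ).1
  have h1 : ∀ μ ∈ M, ∀ m, μ m ≤ 1 := fun μ hμ m =>
    ((hM μ hμ).2.1.le_tsum m fun i _ => (hM μ hμ).1 i).trans_eq (hM μ hμ).2.2
  refine ⟨fun hmom => ?_, fun ⟨ρ, hρ, hρs, hsmooth⟩ =>
    MomentBounded.of_isSmooth h0 h1 ⟨hρ, hρs⟩ hsmooth⟩
  obtain ⟨C, hC⟩ := MomentBounded.exists_mul_succ_pow_le h0 h1 hmom
  obtain ⟨a, ha, haC⟩ := exists_tendsto_atTop_eventually_le fun k => C (k * k + 3)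
  obtain ⟨hpos, hsum⟩ := isWeight_invSuccPow ha
  exact ⟨invSuccPow a, hpos, hsum, isSmooth_invSuccPow h0 hC ha haC⟩
end
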